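/- If in the three-type mixture model the observed discontinuity of E[H^s | X] at m* is D and the observed discontinuity of E[R | X] at m* is P^C (the complier share), with complier retirement behavior R = 1{X > m*} for compliers, R = 0 for never-takers, R = 1 for always-takers, then D / (discontinuity of E[R | X]) = λ whenever P^C > 0. -/

import Mathlib

open Filter Topology

section OneSidedLimits

variable {α β : Type*} [TopologicalSpace α] [LinearOrder α] [TopologicalSpace β]
  {g h : α → β} {c : α}

theorem tendsto_ite_lt_nhdsGT (hg : ContinuousAt g c) :
    Tendsto (fun x => if c < x then g x else h x) (𝓝[>] c) (𝓝 (g c)) :=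
  (hg.tendsto.mono_left nhdsWithin_le_nhds).congr' <|
    eventually_nhdsWithin_of_forall fun _ hx => (if_pos hx).symm

theorem tendsto_ite_lt_nhdsLT (hh : ContinuousAt h c) :
    Tendsto (fun x => if c < x then g x else h x) (𝓝[<] c) (𝓝 (h c)) :=
  (hh.tendsto.mono_left nhdsWithin_le_nhds).congr' <|
    eventually_nhdsWithin_of_forall fun _ hx => (if_neg (not_lt_of_gt hx)).symm

end OneSidedLimits

theorem fuzzy_rd_ratio_identifies_bias_general
    (f0 f1 : ℝ → ℝ) (mstar L lam PN PA PC : ℝ)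
    (hPC : 0 < PC)
    (hc0 : ContinuousAt f0 mstar) (hc1 : ContinuousAt f1 mstar)
    (h0 : f0 mstar = L) (h1 : f1 mstar = L)
    (EHs ER : ℝ → ℝ)
    (hEHs : ∀ x, EHs x =
      PN * f0 x + PA * (f1 x + lam) +
        PC * (if mstar < x then f1 x + lam else f0 x))
    (hER : ∀ x, ER x = if mstar < x then PA + PC else PA) :
    ∃ A B RA RB : ℝ,
      Tendsto EHs (𝓝[>] mstar) (𝓝 A) ∧
      Tendsto EHs (𝓝[<] mstar) (𝓝 B) ∧
      Tendsto ER (𝓝[>] mstar) (𝓝 RA) ∧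
      Tendsto ER (𝓝[<] mstar) (𝓝 RB) ∧
      RA - RB = PC ∧
      (A - B) / (RA - RB) = lam := by
  obtain rfl : EHs = fun x => if mstar < x
      then PN * f0 x + PA * (f1 x + lam) + PC * (f1 x + lam)
      else PN * f0 x + PA * (f1 x + lam) + PC * f0 x :=
    funext fun x => by rw [hEHs, mul_ite, add_ite]
  obtain rfl : ER = fun x => if mstar < x then PA + PC else PA := funext hER
  refine ⟨_, _, _, _, tendsto_ite_lt_nhdsGT (by fun_prop), tendsto_ite_lt_nhdsLT (by fun_prop),
    tendsto_ite_lt_nhdsGT continuousAt_const, tendsto_ite_lt_nhdsLT continuousAt_const,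
    add_sub_cancel_left PA PC, ?_⟩
  -- the complier jump in reported health is `PC * (f1 + lam - f0)`, and `f0 = f1` at `mstar`
  rw [add_sub_cancel_left, h0, h1, div_eq_iff hPC.ne']
  ring

/-- fuzzy-RD / Wald ratio: In the three-type mixture model with never-takers
(`R ≡ 0`), always-takers (`R ≡ 1`) and compliers (`R = 1{X > m*}`), the conditional retirement
probability is `E[R | X=x] = P^A` for `x < m*` and `P^A + P^C` for `x > m*`, so its discontinuity
at `m*` is `P^C`. If `P^C > 0`, the ratio of the discontinuity of `E[H^s | X]` to the
discontinuity of `E[R | X]` at `m*` equals `λ`. -/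
theorem fuzzy_rd_ratio_identifies_bias
    (f0 f1 : ℝ → ℝ) (mstar L lam PN PA PC : ℝ)
    (hPN : 0 ≤ PN) (hPA : 0 ≤ PA) (hPC : 0 < PC)
    (hsum : PN + PA + PC = 1)
    (hc0 : ContinuousAt f0 mstar) (hc1 : ContinuousAt f1 mstar)
    (h0 : f0 mstar = L) (h1 : f1 mstar = L)
    (EHs ER : ℝ → ℝ)
    (hEHs : ∀ x, EHs x =
      PN * f0 x + PA * (f1 x + lam) +
        PC * (if mstar < x then f1 x + lam else f0 x))
    (hER : ∀ x, ER x = if mstar < x then PA + PC else PA) :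
    ∃ A B RA RB : ℝ,
      Tendsto EHs (𝓝[>] mstar) (𝓝 A) ∧
      Tendsto EHs (𝓝[<] mstar) (𝓝 B) ∧
      Tendsto ER (𝓝[>] mstar) (𝓝 RA) ∧
      Tendsto ER (𝓝[<] mstar) (𝓝 RB) ∧
      RA - RB = PC ∧
      (A - B) / (RA - RB) = lam :=
  fuzzy_rd_ratio_identifies_bias_general f0 f1 mstar L lam PN PA PC hPC hc0 hc1 h0 h1 EHs ER hEHs
    hER
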